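/- Let N ≥ 1 and n ≥ 1. For every word w ∈ W_n^{(N)}, (1/2)·ρ∞(w, wst) ≤ τ(w) + 1/n, where wst ∈ W_n^{(N)} is the word A₁A₂…A_N repeated n times and τ(w) = (1/n)·max_{1 ≤ k, ℓ ≤ N, 1 ≤ j ≤ N·n} |w_{A_k}[j] − w_{A_ℓ}[j]|. -/
import Mathlib


/-- `ρ∞(w, v) = (2/n)·max_{1 ≤ k ≤ N, 1 ≤ j ≤ N·n} |w_{A_k}[j] − v_{A_k}[j]|` for words
`w, v` in the `N` letters `A₁, …, A_N` (encoded as elements of `Fin N`), where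
`w_{A_k}[j] = (w.take j).count k` is the number of occurrences of `A_k` among the first
`j` letters. -/
noncomputable def rhoInfN (N n : ℕ) (w v : List (Fin N)) : ℝ :=
  (2 / (n : ℝ)) * (((Finset.Icc 1 (N * n)) ×ˢ (Finset.univ : Finset (Fin N))).sup fun p =>
    (((w.take p.1).count p.2 : ℤ) - ((v.take p.1).count p.2 : ℤ)).natAbs : ℕ)

/-- `τ(w) = (1/n)·max_{1 ≤ k, ℓ ≤ N, 1 ≤ j ≤ N·n} |w_{A_k}[j] − w_{A_ℓ}[j]|`. -/
noncomputable def tauN (N n : ℕ) (w : List (Fin N)) : ℝ :=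
  (1 / (n : ℝ)) *
    (((Finset.Icc 1 (N * n)) ×ˢ
        ((Finset.univ : Finset (Fin N)) ×ˢ (Finset.univ : Finset (Fin N)))).sup fun p =>
      (((w.take p.1).count p.2.1 : ℤ) - ((w.take p.1).count p.2.2 : ℤ)).natAbs : ℕ)

/-- The standard word `wst ∈ W_n^{(N)}`: the word `A₁A₂…A_N` repeated `n` times. -/
def wstN (N n : ℕ) : List (Fin N) :=
  (List.replicate n (List.finRange N)).flatten

lemma count_take_finRange (N j : ℕ) (k : Fin N) :
    ((List.finRange N).take j).count k = if (k : ℕ) < j then 1 else 0 := by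
  by_cases h : (k : ℕ) < j
  · rw [if_pos h]
    refine List.count_eq_one_of_mem ((List.nodup_finRange N).sublist (List.take_sublist _ _)) ?_
    rw [List.mem_take_iff_getElem]
    exact ⟨(k : ℕ), by simp [k.isLt, h], by simp⟩
  · rw [if_neg h, List.count_eq_zero]
    intro hk
    rw [List.mem_take_iff_getElem] at hk
    obtain ⟨i, hi, hik⟩ := hk
    simp [Fin.ext_iff] at hik
    simp at hi
    omega

lemma count_take_wst (N : ℕ) (hN : 1 ≤ N) : ∀ (n j : ℕ), j ≤ N * n → ∀ k : Fin N,
    ((wstN N n).take j).count k = j / N + if (k : ℕ) < j % N then 1 else 0 := by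
  intro n
  induction n with
  | zero =>
    intro j hj k
    obtain rfl : j = 0 := by omega
    simp [wstN]
  | succ m ih =>
    intro j hj k
    have hflat : wstN N (m + 1) = List.finRange N ++ wstN N m := by
      simp [wstN, List.replicate_succ]
    by_cases h : j < N
    · rw [hflat, List.take_append_of_le_length (by simp [Nat.le_of_lt h]),
        count_take_finRange, Nat.div_eq_of_lt h, Nat.mod_eq_of_lt h, Nat.zero_add]
    · push_neg at h
      have h1 : j = N + (j - N) := by omega
      rw [hflat, List.take_append, List.count_append,
        List.take_of_length_le (by simp; omega), List.length_finRange,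
        List.count_eq_one_of_mem (List.nodup_finRange N) (List.mem_finRange k),
        ih (j - N) (by rw [Nat.mul_succ] at hj; omega) k]
      have h2 : j / N = (j - N) / N + 1 := by
        rw [h1, Nat.add_sub_cancel_left, Nat.add_div_left _ (by omega), Nat.add_comm]
      have h3 : j % N = (j - N) % N := by
        conv_lhs => rw [h1]
        exact Nat.add_mod_left N _
      rw [h2, h3]
      ring

/-- For every word `w ∈ W_n^{(N)}` (a word of length `N·n` with exactly `n` occurrences
of each of the `N` letters), `(1/2)·ρ∞(w, wst) ≤ τ(w) + 1/n`. -/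
theorem half_rhoInf_le_tau_add (N n : ℕ) (hN : 1 ≤ N) (hn : 1 ≤ n) (w : List (Fin N))
    (hwl : w.length = N * n) (hw : ∀ k : Fin N, w.count k = n) :
    (1 / 2) * rhoInfN N n w (wstN N n) ≤ tauN N n w + 1 / (n : ℝ) := by
  classical
  set M : ℕ := (((Finset.Icc 1 (N * n)) ×ˢ
        ((Finset.univ : Finset (Fin N)) ×ˢ (Finset.univ : Finset (Fin N)))).sup fun p =>
      (((w.take p.1).count p.2.1 : ℤ) - ((w.take p.1).count p.2.2 : ℤ)).natAbs) with hM
  have key : ∀ j ∈ Finset.Icc 1 (N * n), ∀ k : Fin N,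
      (((w.take j).count k : ℤ) - (((wstN N n).take j).count k : ℤ)).natAbs ≤ M + 1 := by
    intro j hj k
    rw [Finset.mem_Icc] at hj
    have hlen : (w.take j).length = j := by rw [List.length_take]; omega
    have hsum : ∑ ℓ : Fin N, ((w.take j).count ℓ : ℤ) = (j : ℤ) := by
      have := Multiset.sum_count_eq_card (s := (Finset.univ : Finset (Fin N)))
        (m := (↑(w.take j) : Multiset (Fin N))) (fun a _ => Finset.mem_univ a)
      simp only [Multiset.coe_count, Multiset.coe_card, hlen] at this
      exact_mod_cast congrArg (Nat.cast : ℕ → ℤ) this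
    have hMb : ∀ ℓ : Fin N, |((w.take j).count k : ℤ) - ((w.take j).count ℓ : ℤ)| ≤ (M : ℤ) := by
      intro ℓ
      rw [Int.abs_eq_natAbs]
      have hle := Finset.le_sup (f := fun p : ℕ × (Fin N × Fin N) =>
        (((w.take p.1).count p.2.1 : ℤ) - ((w.take p.1).count p.2.2 : ℤ)).natAbs)
        (b := (j, (k, ℓ))) (Finset.mem_product.mpr ⟨Finset.mem_Icc.mpr ⟨hj.1, hj.2⟩,
          Finset.mem_product.mpr ⟨Finset.mem_univ _, Finset.mem_univ _⟩⟩)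
      exact Int.ofNat_le.mpr hle
    have h1 : |(N : ℤ) * ((w.take j).count k : ℤ) - (j : ℤ)| ≤ (N : ℤ) * (M : ℤ) := by
      have heq : (N : ℤ) * ((w.take j).count k : ℤ) - (j : ℤ)
          = ∑ ℓ : Fin N, (((w.take j).count k : ℤ) - ((w.take j).count ℓ : ℤ)) := by
        rw [Finset.sum_sub_distrib, hsum, Finset.sum_const, Finset.card_univ, Fintype.card_fin]
        push_cast; ring
      rw [heq]
      calc |∑ ℓ : Fin N, (((w.take j).count k : ℤ) - ((w.take j).count ℓ : ℤ))|
          ≤ ∑ ℓ : Fin N, |((w.take j).count k : ℤ) - ((w.take j).count ℓ : ℤ)| :=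
            Finset.abs_sum_le_sum_abs _ _
        _ ≤ ∑ _ℓ : Fin N, (M : ℤ) := Finset.sum_le_sum fun ℓ _ => hMb ℓ
        _ = (N : ℤ) * (M : ℤ) := by
            rw [Finset.sum_const, Finset.card_univ, Fintype.card_fin]; push_cast; ring
    have h2 : |(N : ℤ) * (((wstN N n).take j).count k : ℤ) - (j : ℤ)| ≤ (N : ℤ) := by
      have hb := count_take_wst N hN n j hj.2 k
      obtain ⟨q, r, hqd, hrm⟩ : ∃ q r, j / N = q ∧ j % N = r := ⟨_, _, rfl, rfl⟩
      rw [hqd, hrm] at hb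
      have hdm : N * q + r = j := by rw [← hqd, ← hrm]; exact Nat.div_add_mod j N
      have hrlt : r < N := by rw [← hrm]; exact Nat.mod_lt j (by omega)
      have hj' : (j : ℤ) = (N : ℤ) * (q : ℤ) + (r : ℤ) := by exact_mod_cast hdm.symm
      have hmlt : (r : ℤ) < (N : ℤ) := by exact_mod_cast hrlt
      by_cases h : (k : ℕ) < r
      · rw [hb, if_pos h]
        have he : (N : ℤ) * ((q + 1 : ℕ) : ℤ) - (j : ℤ) = (N : ℤ) - (r : ℤ) := by
          push_cast; rw [hj']; ring
        rw [he, abs_le]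
        omega
      · rw [hb, if_neg h, Nat.add_zero]
        have he : (N : ℤ) * ((q : ℕ) : ℤ) - (j : ℤ) = -(r : ℤ) := by
          rw [hj']; ring
        rw [he, abs_le]
        omega
    have h3 : |(N : ℤ)| * |((w.take j).count k : ℤ) - (((wstN N n).take j).count k : ℤ)|
        ≤ (N : ℤ) * ((M : ℤ) + 1) := by
      rw [← abs_mul]
      have : (N : ℤ) * (((w.take j).count k : ℤ) - (((wstN N n).take j).count k : ℤ))
          = ((N : ℤ) * ((w.take j).count k : ℤ) - (j : ℤ))
            - ((N : ℤ) * (((wstN N n).take j).count k : ℤ) - (j : ℤ)) := by ring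
      rw [this]
      calc _ ≤ |(N : ℤ) * ((w.take j).count k : ℤ) - (j : ℤ)|
              + |(N : ℤ) * (((wstN N n).take j).count k : ℤ) - (j : ℤ)| := abs_sub _ _
        _ ≤ (N : ℤ) * (M : ℤ) + (N : ℤ) := add_le_add h1 h2
        _ = (N : ℤ) * ((M : ℤ) + 1) := by ring
    have hNpos : (0 : ℤ) < (N : ℤ) := by exact_mod_cast hN
    rw [abs_of_pos hNpos] at h3
    have h4 : |((w.take j).count k : ℤ) - (((wstN N n).take j).count k : ℤ)| ≤ (M : ℤ) + 1 :=
      le_of_mul_le_mul_left h3 hNpos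
    rw [Int.abs_eq_natAbs] at h4
    exact_mod_cast h4
  have hS : (((Finset.Icc 1 (N * n)) ×ˢ (Finset.univ : Finset (Fin N))).sup fun p =>
      (((w.take p.1).count p.2 : ℤ) - (((wstN N n).take p.1).count p.2 : ℤ)).natAbs) ≤ M + 1 := by
    apply Finset.sup_le
    intro p hp
    rw [Finset.mem_product] at hp
    exact key p.1 hp.1 p.2
  have hn' : (0 : ℝ) < (n : ℝ) := by exact_mod_cast hn
  rw [rhoInfN, tauN]
  set S : ℕ := (((Finset.Icc 1 (N * n)) ×ˢ (Finset.univ : Finset (Fin N))).sup fun p =>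
      (((w.take p.1).count p.2 : ℤ) - (((wstN N n).take p.1).count p.2 : ℤ)).natAbs) with hSdef
  have hSM : (S : ℝ) ≤ (M : ℝ) + 1 := by exact_mod_cast hS
  have e1 : (1 / 2 : ℝ) * (2 / (n : ℝ) * (S : ℝ)) = (S : ℝ) / (n : ℝ) := by ring
  have e2 : (1 / (n : ℝ)) * (M : ℝ) + 1 / (n : ℝ) = ((M : ℝ) + 1) / (n : ℝ) := by ring
  rw [e1, e2]
  gcongr
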